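/- arXiv:2101.06825 — 6 statements merged into one kernel-verified Lean document; each statement's English description precedes it below -/
import Mathlib

section
/- Adding a history (delay) variable preserves invariance: let S = ⟨X, I, T⟩ be a transition system over states of type A, and let f : A → B be a function (the term being delayed). Define the augmented system S^h over A × B with initial states I^h(a,b) ↔ I(a) (b unconstrained) and transition T^h((a,b),(a',b')) ↔ T(a,a') ∧ b' = f(a). Then a property P : A → Prop holds in all reachable states of S if and only if the property λ(a,b), P a holds in all reachable states of S^h. -/
inductive Reachable {A : Type*} (I : A → Prop) (T : A → A → Prop) : A → Prop
  | init : ∀ a, I a → Reachable I T a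
  | step : ∀ a b, Reachable I T a → T a b → Reachable I T b

theorem history_preserves_invariance {A B : Type*}
    (I : A → Prop) (T : A → A → Prop) (f : A → B) (P : A → Prop) :
    (∀ a, Reachable I T a → P a) ↔
      (∀ s : A × B,
        Reachable (fun s : A × B => I s.1)
          (fun s s' : A × B => T s.1 s'.1 ∧ s'.2 = f s.1) s → P s.1) := by
  constructor
  · intro h s hs
    apply h
    induction hs with
    | init a ha => exact Reachable.init _ ha
    | step a b _ hT ih => exact Reachable.step _ _ ih hT.1
  · intro h a ha
    suffices hb : ∃ b : B, Reachable (fun s : A × B => I s.1)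
        (fun s s' : A × B => T s.1 s'.1 ∧ s'.2 = f s.1) (a, b) by
      obtain ⟨b, hb⟩ := hb
      exact h (a, b) hb
    induction ha with
    | init a ha => exact ⟨f a, Reachable.init _ ha⟩
    | step a b _ hT ih =>
      obtain ⟨c, hc⟩ := ih
      exact ⟨f a, Reachable.step _ _ hc ⟨hT, rfl⟩⟩
end

section
/- Frozen prophecy variables simulate universal quantification: let S = (I, T) be a transition system over state type A, and P : A → B → Prop a property with an extra parameter. Define S^p over A × B with I^p(a,v) ↔ I(a) and T^p((a,v),(a',v')) ↔ T(a,a') ∧ v' = v (the B-component is frozen and initially unconstrained). Then (∀ reachable state a of S, ∀ y : B, P a y) if and only if (∀ reachable state (a,v) of S^p, P a v). -/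
theorem frozen_prophecy_simulates_forall {A B : Type*}
    (I : A → Prop) (T : A → A → Prop) (P : A → B → Prop) :
    (∀ a, Reachable I T a → ∀ y : B, P a y) ↔
      (∀ s : A × B,
        Reachable (fun s : A × B => I s.1)
          (fun s s' : A × B => T s.1 s'.1 ∧ s'.2 = s.2) s → P s.1 s.2) := by
  constructor
  · intro h s hs
    apply h
    induction hs with
    | init a ha => exact Reachable.init _ ha
    | step a b _ hT ih => exact Reachable.step _ _ ih hT.1
  · intro h a ha y
    have : Reachable (fun s : A × B => I s.1)
        (fun s s' : A × B => T s.1 s'.1 ∧ s'.2 = s.2) (a, y) := by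
      induction ha with
      | init a ha => exact Reachable.init (a, y) ha
      | step a b _ hT ih => exact Reachable.step (a, y) (b, y) ih ⟨hT, rfl⟩
    exact h (a, y) this
end

section
/- Combined prophecy soundness (n = 0 case of Prophecize): let S = (I,T) be a transition system over A, P : A → Prop a property, and t : A → B a term. Form S^p over A × B with I^p(a,v) ↔ I(a), T^p((a,v),(a',v')) ↔ T(a,a') ∧ v' = v, and property P^p(a,v) := (v = t a → P a). Then S satisfies invariant P if and only if S^p satisfies invariant P^p. -/
theorem prophecize_zero_delay_sound {A B : Type*}
    (I : A → Prop) (T : A → A → Prop) (P : A → Prop) (t : A → B) :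
    (∀ a, Reachable I T a → P a) ↔
      (∀ s : A × B,
        Reachable (fun s : A × B => I s.1)
          (fun s s' : A × B => T s.1 s'.1 ∧ s'.2 = s.2) s →
        (s.2 = t s.1 → P s.1)) := by
  constructor
  · intro h s hs heq
    refine h s.1 ?_
    clear h heq
    induction hs with
    | init a ha => exact Reachable.init _ ha
    | step a b _ hT ih => exact Reachable.step _ _ ih hT.1
  · intro h a ha
    have key : ∀ v : B, Reachable (fun s : A × B => I s.1)
        (fun s s' : A × B => T s.1 s'.1 ∧ s'.2 = s.2) (a, v) := by
      intro v
      induction ha with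
      | init a ha => exact Reachable.init _ ha
      | step a b _ hT ih => exact Reachable.step (a, v) (b, v) ih ⟨hT, rfl⟩
    exact h (a, t a) (key (t a)) rfl
end

section
/- Prophecize with delay n ≥ 1 preserves invariance: let S = (I,T) over A, P : A → Prop, t : A → B, n ≥ 1. Augment S with n chained history variables for t (h₁' = t(a), h_i' = h_{i-1}) and a frozen prophecy variable p (p' = p, both histories and p unconstrained initially), and replace the property by P'(a,h,p) := (p = h_n → P a). Then S satisfies invariant P if and only if the augmented system satisfies invariant P'. -/
namespace Reachable

variable {A A' : Type*} {I : A → Prop} {T : A → A → Prop}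
  {I' : A' → Prop} {T' : A' → A' → Prop}

theorem map (f : A → A') (hI : ∀ a, I a → I' (f a)) (hT : ∀ a b, T a b → T' (f a) (f b))
    {a : A} (ha : Reachable I T a) : Reachable I' T' (f a) := by
  induction ha with
  | init a h => exact .init _ (hI a h)
  | step a b _ hab ih => exact .step _ _ ih (hT a b hab)

theorem exists_lift (f : A' → A) (hI : ∀ a, I a → ∃ a', f a' = a ∧ I' a')
    (hT : ∀ a' b, T (f a') b → ∃ b', f b' = b ∧ T' a' b')
    {a : A} (ha : Reachable I T a) : ∃ a', f a' = a ∧ Reachable I' T' a' := by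
  induction ha with
  | init a h =>
    obtain ⟨a', rfl, h'⟩ := hI a h
    exact ⟨a', rfl, .init _ h'⟩
  | step a b _ hab ih =>
    obtain ⟨a', rfl, ha'⟩ := ih
    obtain ⟨b', rfl, hab'⟩ := hT a' b hab
    exact ⟨b', rfl, .step _ _ ha' hab'⟩

end Reachable

def pushHistory {B : Type*} {n : ℕ} (b : B) (h : Fin n → B) : Fin n → B :=
  fun i => if (i : ℕ) = 0 then b else h ⟨i - 1, (Nat.sub_le _ _).trans_lt i.isLt⟩

theorem pushHistory_zero {B : Type*} {n : ℕ} (b : B) (h : Fin n → B) (h0 : 0 < n) :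
    pushHistory b h ⟨0, h0⟩ = b :=
  if_pos rfl

theorem pushHistory_of_pos {B : Type*} {n : ℕ} (b : B) (h : Fin n → B) (i : Fin n)
    (hi : 1 ≤ (i : ℕ)) : pushHistory b h i = h ⟨i - 1, (Nat.sub_le _ _).trans_lt i.isLt⟩ :=
  if_neg (Nat.one_le_iff_ne_zero.mp hi)

/-- Definitionally the transition relation of the augmented system in
`prophecize_with_delay_sound`. -/
def prophecyStep {A B : Type*} (T : A → A → Prop) (t : A → B) {n : ℕ} (hn : 1 ≤ n)
    (s s' : A × (Fin n → B) × B) : Prop :=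
  T s.1 s'.1 ∧ s'.2.1 ⟨0, hn⟩ = t s.1 ∧
    (∀ i : Fin n, 1 ≤ (i : ℕ) →
      s'.2.1 i = s.2.1 ⟨(i : ℕ) - 1, (Nat.sub_le _ _).trans_lt i.isLt⟩) ∧
    s'.2.2 = s.2.2

namespace Reachable

variable {A B : Type*} {I : A → Prop} {T : A → A → Prop} {t : A → B} {n : ℕ}
  (hn : 1 ≤ n)

theorem fst_of_prophecyStep {s : A × (Fin n → B) × B}
    (hs : Reachable (fun s => I s.1) (prophecyStep T t hn) s) : Reachable I T s.1 :=
  hs.map Prod.fst (fun _ h => h) (fun _ _ h => h.1)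

theorem exists_prophecyStep_fst_eq {a : A} (ha : Reachable I T a) :
    ∃ s, s.1 = a ∧ Reachable (fun s => I s.1) (prophecyStep T t hn) s :=
  ha.exists_lift Prod.fst (fun a h => ⟨(a, fun _ => t a, t a), rfl, h⟩)
    (fun s b hT => ⟨(b, pushHistory (t s.1) s.2.1, s.2.2), rfl,
      hT, pushHistory_zero (t s.1) s.2.1 hn, fun i hi => pushHistory_of_pos (t s.1) s.2.1 i hi,
      rfl⟩)

theorem update_prophecy {s : A × (Fin n → B) × B}
    (hs : Reachable (fun s => I s.1) (prophecyStep T t hn) s) (q : B) :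
    Reachable (fun s => I s.1) (prophecyStep T t hn) (s.1, s.2.1, q) :=
  hs.map (fun s : A × (Fin n → B) × B => (s.1, s.2.1, q)) (fun _ h => h)
    (fun _ _ h => ⟨h.1, h.2.1, h.2.2.1, rfl⟩)

end Reachable

theorem prophecize_with_delay_sound {A B : Type*}
    (I : A → Prop) (T : A → A → Prop) (P : A → Prop) (t : A → B)
    (n : ℕ) (hn : 1 ≤ n) :
    (∀ a, Reachable I T a → P a) ↔
      (∀ s : A × (Fin n → B) × B,
        Reachable (fun s : A × (Fin n → B) × B => I s.1)
          (fun s s' : A × (Fin n → B) × B =>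
            T s.1 s'.1 ∧
            s'.2.1 ⟨0, by omega⟩ = t s.1 ∧
            (∀ i : Fin n, 1 ≤ (i : ℕ) →
              s'.2.1 i = s.2.1 ⟨(i : ℕ) - 1, by omega⟩) ∧
            s'.2.2 = s.2.2) s →
        (s.2.2 = s.2.1 ⟨n - 1, by omega⟩ → P s.1)) := by
  constructor
  · intro hP s hs _
    exact hP _ (hs.fst_of_prophecyStep hn)
  · intro hP a ha
    obtain ⟨s, rfl, hs⟩ := ha.exists_prophecyStep_fst_eq (t := t) hn
    exact hP (s.1, s.2.1, s.2.1 ⟨n - 1, Nat.sub_one_lt_of_le hn le_rfl⟩)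
      (hs.update_prophecy hn _) rfl
end

section
/- Pre-state property assumption is sound for the first violation: let S = (I,T) with property P, and let S' = (I, T') where T'(s,s') := T(s,s') ∧ P(s). Then S satisfies invariant P if and only if S' satisfies invariant P. -/
theorem prestate_property_assumption_sound {A : Type*}
    (I : A → Prop) (T : A → A → Prop) (P : A → Prop) :
    (∀ a, Reachable I T a → P a) ↔
      (∀ a, Reachable I (fun s s' => T s s' ∧ P s) a → P a) := by
  constructor
  · intro h a ha
    apply h
    induction ha with
    | init a hI => exact Reachable.init a hI
    | step a b _ hT ih => exact Reachable.step a b ih hT.1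
  · intro h a ha
    have key : Reachable I (fun s s' => T s s' ∧ P s) a := by
      induction ha with
      | init a hI => exact Reachable.init a hI
      | step a b _ hT ih => exact Reachable.step a b ih ⟨hT, h a ih⟩
    exact h a key
end

section
/- k-induction soundness: let S = (I,T) be a transition system over A and P : A → Prop. Suppose (base case) every path s₀,…,s_{j} from an initial state with j < k satisfies P at every state, and (step case) for every sequence s₀,…,s_k with T(s_i,s_{i+1}) for all i < k and P(s_i) for all i < k, P(s_k) holds. Then P holds in all reachable states of S. -/
theorem k_induction_sound {A : Type*}
    (I : A → Prop) (T : A → A → Prop) (P : A → Prop)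
    (k : ℕ) (hk : 1 ≤ k)
    (base : ∀ j < k, ∀ s : ℕ → A,
      I (s 0) → (∀ i < j, T (s i) (s (i+1))) → ∀ i ≤ j, P (s i))
    (step : ∀ s : ℕ → A,
      (∀ i < k, T (s i) (s (i+1))) → (∀ i < k, P (s i)) → P (s k)) :
    ∀ a : A,
      (∃ (j : ℕ) (s : ℕ → A),
        I (s 0) ∧ (∀ i < j, T (s i) (s (i+1))) ∧ ∃ i ≤ j, s i = a) →
      P a := by
  have key : ∀ n, ∀ s : ℕ → A, I (s 0) → (∀ i < n, T (s i) (s (i+1))) → P (s n) := by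
    intro n
    induction n using Nat.strong_induction_on with
    | _ n ih =>
      intro s h0 hT
      by_cases h : n < k
      · exact base n h s h0 hT n le_rfl
      · push_neg at h
        have hs := step (fun i => s (n - k + i)) ?_ ?_
        · simpa [Nat.sub_add_cancel h] using hs
        · intro i hi
          have h1 : n - k + (i + 1) = (n - k + i) + 1 := by omega
          simpa [h1] using hT (n - k + i) (by omega)
        · intro i hi
          exact ih (n - k + i) (by omega) s h0 (fun m hm => hT m (by omega))
  rintro a ⟨j, s, h0, hT, i, hij, rfl⟩
  exact key i s h0 (fun m hm => hT m (by omega))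
end
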